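/- Let L be a positive integer, let a, M be positive integers dividing L, let g ∈ ℂ^L generate a Gabor frame G(g,a,M), and let h ∈ ℂ^L. Then h is a dual window for g (i.e. f = Σ_{n=0}^{L/a−1} Σ_{m=0}^{M−1} ⟨f, M_{m/M}T_{na} h⟩ · (M_{m/M}T_{na} g) for all f ∈ ℂ^L) if and only if h satisfies the Wexler–Raz equations: (M/a)·⟨h, (e^{2πim·/a})·T_{nM} g⟩ = δ[n]δ[m] for all m = 0,…,a−1 and n = 0,…,L/M−1. -/

import Mathlib

/-- The Gabor atom `M_{m/M} T_n g` on `ℂ^L` (identified with `ZMod L → ℂ`):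
circular translation by `n` followed by modulation `e^{2πiml/M}`. -/
noncomputable def gaborAtom (L M : ℕ) [NeZero L] (g : ZMod L → ℂ) (m n : ℕ) :
    ZMod L → ℂ :=
  fun l => g (l - (n : ZMod L)) *
    Complex.exp (2 * Real.pi * Complex.I * (m : ℂ) * (l.val : ℂ) / (M : ℂ))

/-- The inner product `⟨f, g⟩ = ∑_{l=0}^{L-1} f[l]·conj(g[l])` on `ℂ^L`. -/
noncomputable def ipL (L : ℕ) [NeZero L] (f g : ZMod L → ℂ) : ℂ :=
  ∑ l : ZMod L, f l * star (g l)

/-!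
Testing the reconstruction formula on point masses turns duality into the kernel identity
`∑_{m,n} h_{m,n}(x) · conj g_{m,n}(y) = δ(x, y)`. The sum over the modulations vanishes unless
`x ≡ y (mod M)`, so the identity says that for every `d ∈ Mℤ/Lℤ` the `a`-periodic function
`x ↦ M ∑_n h(x - na) · conj g(x - na - d)` is the constant `δ(d)`. Read on `ℤ/aℤ`, a function
is the constant `c` iff its DFT is `a c δ`, and the DFT coefficients of this periodization
are `a` times the Wexler–Raz quantities `(M/a)⟨h, e^{2πim·/a} T_d g⟩`.
-/

open ZMod Finset

lemma ZMod.star_stdAddChar {N : ℕ} [NeZero N] (x : ZMod N) :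
    star (stdAddChar x) = stdAddChar (-x) := by
  rw [stdAddChar_apply, stdAddChar_apply, AddChar.map_neg_eq_inv, Circle.coe_inv_eq_conj]
  rfl

lemma ZMod.sum_stdAddChar_mul {N : ℕ} [NeZero N] (k : ZMod N) :
    ∑ m : ZMod N, stdAddChar (m * k) = if k = 0 then (N : ℂ) else 0 := by
  rw [AddChar.sum_mulShift k (isPrimitive_stdAddChar N), ZMod.card, Nat.cast_ite, Nat.cast_zero]

lemma ZMod.sum_fin_natCast {N : ℕ} [NeZero N] {β : Type*} [AddCommMonoid β]
    (F : ZMod N → β) :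
    ∑ m : Fin N, F (m : ℕ) = ∑ m : ZMod N, F m := by
  refine Fintype.sum_bijective _ ?_ _ _ fun _ => rfl
  refine (Fintype.bijective_iff_injective_and_card _).mpr ⟨fun m m' hm => Fin.ext ?_, by simp⟩
  simpa [ZMod.val_cast_of_lt m.isLt, ZMod.val_cast_of_lt m'.isLt] using congrArg ZMod.val hm

lemma ZMod.dft_const {N : ℕ} [NeZero N] (c : ℂ) (m : ZMod N) :
    𝓕 (fun _ => c) m = if m = 0 then (N : ℂ) * c else 0 := by
  simp only [dft_apply, smul_eq_mul, ← Finset.sum_mul, neg_mul_eq_mul_neg, sum_stdAddChar_mul,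
    neg_eq_zero, ite_mul, zero_mul]

lemma ZMod.forall_iff_forall_lt {N : ℕ} [NeZero N] (P : ZMod N → Prop) :
    (∀ m, P m) ↔ ∀ m < N, P m :=
  ⟨fun H m _ => H m, fun H m => by simpa using H m.val m.val_lt⟩

lemma ZMod.natCast_eq_zero_iff_of_lt {N m : ℕ} (hm : m < N) : (m : ZMod N) = 0 ↔ m = 0 := by
  rw [natCast_eq_zero_iff]
  exact ⟨fun h => Nat.eq_zero_of_dvd_of_lt h hm, by rintro rfl; exact dvd_zero N⟩

lemma ZMod.val_natCast_mul_of_lt_div {L d n : ℕ} (hd : d ∣ L) (hn : n < L / d) :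
    ((n * d : ℕ) : ZMod L).val = n * d :=
  val_cast_of_lt <| by simpa [mul_comm] using (Nat.lt_div_iff_mul_lt' hd n).mp hn

section Kernel

variable {L d : ℕ} [NeZero L]

lemma ZMod.castHom_eq_zero_iff_exists_natCast_mul (hd : d ∣ L) (y : ZMod L) :
    castHom hd (ZMod d) y = 0 ↔ ∃ n < L / d, ((n * d : ℕ) : ZMod L) = y := by
  rw [castHom_apply, ← natCast_val, natCast_eq_zero_iff]
  constructor
  · rintro ⟨n, hn⟩
    refine ⟨y.val / d, Nat.div_lt_div_of_lt_of_dvd hd y.val_lt, ?_⟩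
    rw [Nat.div_mul_cancel ⟨n, hn⟩, natCast_zmod_val]
  · rintro ⟨n, hn, rfl⟩
    rw [val_natCast_mul_of_lt_div hd hn]
    exact dvd_mul_left d n

lemma ZMod.natCast_mul_injOn (hd : d ∣ L) :
    Set.InjOn (fun n : ℕ => ((n * d : ℕ) : ZMod L)) (Set.Iio (L / d)) := by
  intro n hn n' hn' h
  have := congrArg ZMod.val h
  simp only [val_natCast_mul_of_lt_div hd hn, val_natCast_mul_of_lt_div hd hn'] at this
  exact Nat.eq_of_mul_eq_mul_right
    (Nat.pos_of_ne_zero (ne_zero_of_dvd_ne_zero (NeZero.ne L) hd)) this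

lemma ZMod.sum_sub_natCast_mul (hd : d ∣ L) {β : Type*} [AddCommMonoid β] (φ : ZMod L → β)
    (x : ZMod L) :
    ∑ n : Fin (L / d), φ (x - ((n * d : ℕ) : ZMod L)) =
      ∑ y : {y // castHom hd (ZMod d) y = castHom hd (ZMod d) x}, φ y := by
  have hker (n : Fin (L / d)) : castHom hd (ZMod d) ((n * d : ℕ) : ZMod L) = 0 :=
    (castHom_eq_zero_iff_exists_natCast_mul hd _).mpr ⟨n, n.isLt, rfl⟩
  refine Fintype.sum_bijective
    (fun n => ⟨x - ((n * d : ℕ) : ZMod L), by rw [map_sub, hker, sub_zero]⟩)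
    ⟨fun n n' h => ?_, fun y => ?_⟩ _ _ fun _ => rfl
  · exact Fin.ext <| natCast_mul_injOn hd n.isLt n'.isLt (by simpa using h)
  · obtain ⟨n, hn, hxy⟩ := (castHom_eq_zero_iff_exists_natCast_mul hd (x - y)).mp
      (by rw [map_sub, y.prop, sub_self])
    exact ⟨⟨n, hn⟩, Subtype.ext (by simp [hxy])⟩

lemma ZMod.forall_castHom_eq_zero_iff (hd : d ∣ L) (P : ZMod L → Prop) :
    (∀ y, castHom hd (ZMod d) y = 0 → P y) ↔ ∀ n < L / d, P ((n * d : ℕ) : ZMod L) := by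
  simp only [castHom_eq_zero_iff_exists_natCast_mul hd]
  exact ⟨fun H n hn => H _ ⟨n, hn, rfl⟩, fun H y ⟨n, hn, hy⟩ => hy ▸ H n hn⟩

lemma ZMod.natCast_mul_eq_zero_iff {n : ℕ} (hd : d ∣ L) (hn : n < L / d) :
    ((n * d : ℕ) : ZMod L) = 0 ↔ n = 0 := by
  refine ⟨fun h => natCast_mul_injOn hd hn (Nat.zero_lt_of_lt hn) (by simpa using h), ?_⟩
  rintro rfl
  simp

end Kernel

noncomputable def periodization {L d : ℕ} [NeZero L] (hd : d ∣ L) (φ : ZMod L → ℂ) :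
    ZMod d → ℂ :=
  fun x => ∑ y : {y // castHom hd (ZMod d) y = x}, φ y

section Periodization

variable {L d : ℕ} [NeZero L]

lemma periodization_castHom (hd : d ∣ L) (φ : ZMod L → ℂ) (x : ZMod L) :
    periodization hd φ (castHom hd (ZMod d) x) =
      ∑ n : Fin (L / d), φ (x - ((n * d : ℕ) : ZMod L)) :=
  (sum_sub_natCast_mul hd φ x).symm

lemma dft_periodization [NeZero d] (hd : d ∣ L) (φ : ZMod L → ℂ) (m : ZMod d) :
    𝓕 (periodization hd φ) m = ∑ y, stdAddChar (-(castHom hd (ZMod d) y * m)) * φ y := by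
  calc 𝓕 (periodization hd φ) m
      = ∑ x, ∑ y : {y // castHom hd (ZMod d) y = x},
          stdAddChar (-(castHom hd (ZMod d) y * m)) * φ y := by
        simp only [dft_apply, periodization, smul_eq_mul, mul_sum]
        refine sum_congr rfl fun x _ => sum_congr rfl fun y _ => ?_
        rw [y.prop]
    _ = _ := Fintype.sum_fiberwise (castHom hd (ZMod d))
          fun y => stdAddChar (-(castHom hd (ZMod d) y * m)) * φ y

theorem forall_sum_sub_natCast_mul_eq_iff [NeZero d] (hd : d ∣ L) (φ : ZMod L → ℂ)
    (c : ℂ) :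
    (∀ x : ZMod L, ∑ n : Fin (L / d), φ (x - ((n * d : ℕ) : ZMod L)) = c) ↔
      ∀ m : ZMod d, (d : ℂ)⁻¹ * ∑ y, stdAddChar (-(castHom hd (ZMod d) y * m)) * φ y =
        if m = 0 then c else 0 := by
  simp_rw [← periodization_castHom hd, ← dft_periodization hd]
  rw [← (castHom_surjective hd).forall (p := fun y => periodization hd φ y = c), ← funext_iff,
    ← (𝓕).injective.eq_iff, funext_iff]
  refine forall_congr' fun m => ?_
  rw [dft_const, inv_mul_eq_iff_eq_mul₀ (NeZero.ne _), mul_ite, mul_zero]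

end Periodization

theorem forall_eq_sum_inner_mul_iff {X ι : Type*} [Fintype X] [DecidableEq X] [Fintype ι]
    (u v : ι → X → ℂ) :
    (∀ f : X → ℂ, ∀ x, f x = ∑ i, (∑ y, f y * star (v i y)) * u i x) ↔
      ∀ x y, ∑ i, v i x * star (u i y) = if x = y then 1 else 0 := by
  have star_kernel (x y : X) :
      star (∑ i, v i x * star (u i y)) = ∑ i, star (v i x) * u i y := by
    simp only [star_sum, star_mul', star_star, mul_comm]
  constructor
  · intro H x y
    have hδ := H (fun z => if z = x then 1 else 0) y
    simp only [ite_mul, one_mul, zero_mul, sum_ite_eq', mem_univ, if_true] at hδ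
    rw [← star_inj, star_kernel, ← hδ]
    simp [eq_comm]
  · intro H f x
    calc f x = ∑ y, f y * star (if y = x then 1 else 0) := by simp
      _ = ∑ y, ∑ i, f y * (star (v i y) * u i x) := by
        simp only [← H, star_kernel, mul_sum]
      _ = ∑ i, (∑ y, f y * star (v i y)) * u i x := by
        rw [sum_comm]
        simp only [sum_mul, mul_assoc]

lemma forall_ite_sub_eq_ite_iff {G : Type*} [AddCommGroup G] [DecidableEq G] (p : G → Prop)
    [DecidablePred p] (hp : p 0) (F : G → G → ℂ) :
    (∀ x y, (if p (x - y) then F x y else 0) = if x = y then 1 else 0) ↔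
      ∀ d, p d → ∀ x, F x (x - d) = if d = 0 then 1 else 0 := by
  constructor
  · intro H d hd x
    simpa [hd, sub_sub_cancel, eq_comm (a := x), sub_eq_self] using H x (x - d)
  · intro H x y
    by_cases hxy : p (x - y)
    · simpa [hxy, sub_sub_cancel, sub_eq_zero] using H (x - y) hxy x
    · rw [if_neg hxy, if_neg (by rintro rfl; exact hxy (by simpa using hp))]

lemma exp_eq_stdAddChar_castHom {L N : ℕ} [NeZero L] [NeZero N] (hN : N ∣ L) (m : ℕ)
    (x : ZMod L) :
    Complex.exp (2 * Real.pi * Complex.I * (m : ℂ) * (x.val : ℂ) / (N : ℂ)) =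
      stdAddChar ((m : ZMod N) * castHom hN (ZMod N) x) := by
  rw [castHom_apply, ← natCast_val, ← Nat.cast_mul, stdAddChar_apply, toCircle_natCast]
  push_cast
  ring_nf

section Gabor

variable {L M : ℕ} [NeZero L] [NeZero M]

lemma gaborAtom_eq_stdAddChar (hML : M ∣ L) (g : ZMod L → ℂ) (m t : ℕ) (x : ZMod L) :
    gaborAtom L M g m t x = g (x - t) * stdAddChar ((m : ZMod M) * castHom hML (ZMod M) x) := by
  rw [gaborAtom, exp_eq_stdAddChar_castHom hML]

lemma sum_gaborAtom_mul_star (hML : M ∣ L) (g h : ZMod L → ℂ) (t : ℕ) (x y : ZMod L) :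
    ∑ m : Fin M, gaborAtom L M h m t x * star (gaborAtom L M g m t y) =
      if castHom hML (ZMod M) (x - y) = 0 then (M : ℂ) * (h (x - t) * star (g (y - t)))
      else 0 := by
  have hterm (m : ZMod M) :
      h (x - t) * stdAddChar (m * castHom hML (ZMod M) x) *
        star (g (y - t) * stdAddChar (m * castHom hML (ZMod M) y)) =
      h (x - t) * star (g (y - t)) * stdAddChar (m * castHom hML (ZMod M) (x - y)) := by
    rw [star_mul', star_stdAddChar, map_sub, mul_sub, sub_eq_add_neg (m * _),
      AddChar.map_add_eq_mul]
    ring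
  simp only [gaborAtom_eq_stdAddChar hML, hterm, ← mul_sum,
    sum_fin_natCast fun m => stdAddChar (m * castHom hML (ZMod M) (x - y))]
  rw [sum_stdAddChar_mul, mul_ite, mul_zero, mul_comm]

theorem forall_eq_sum_gaborAtom_iff (hML : M ∣ L) (a : ℕ) (g h : ZMod L → ℂ) :
    (∀ f : ZMod L → ℂ, ∀ l : ZMod L,
        f l = ∑ n : Fin (L / a), ∑ m : Fin M,
          ipL L f (gaborAtom L M h m ((n : ℕ) * a)) * gaborAtom L M g m ((n : ℕ) * a) l) ↔
      ∀ d, castHom hML (ZMod M) d = 0 → ∀ x, ∑ n : Fin (L / a),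
        (M : ℂ) * (h (x - ((n * a : ℕ) : ZMod L)) *
          star (g (x - ((n * a : ℕ) : ZMod L) - d))) = if d = 0 then 1 else 0 := by
  have hkernel := forall_eq_sum_inner_mul_iff
    (fun p : Fin (L / a) × Fin M => gaborAtom L M g p.2 (p.1 * a))
    (fun p => gaborAtom L M h p.2 (p.1 * a))
  simp only [Fintype.sum_prod_type] at hkernel
  refine hkernel.trans ?_
  simp only [sum_gaborAtom_mul_star hML, sum_ite_irrel, sum_const_zero]
  rw [forall_ite_sub_eq_ite_iff (fun d => castHom hML (ZMod M) d = 0) (map_zero _)]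
  simp only [sub_right_comm _ _ ((_ : ℕ) : ZMod L)]

end Gabor

lemma ipL_exp_mul_eq_sum_stdAddChar {L a : ℕ} [NeZero L] [NeZero a] (haL : a ∣ L)
    (g h : ZMod L → ℂ) (m : ℕ) (d : ZMod L) :
    ipL L h (fun l =>
        Complex.exp (2 * Real.pi * Complex.I * (m : ℂ) * (l.val : ℂ) / (a : ℂ)) * g (l - d)) =
      ∑ y, stdAddChar (-(castHom haL (ZMod a) y * (m : ZMod a))) * (h y * star (g (y - d))) := by
  refine sum_congr rfl fun y _ => ?_
  dsimp only
  rw [exp_eq_stdAddChar_castHom haL, star_mul', star_stdAddChar, mul_comm (m : ZMod a)]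
  ring

theorem dual_window_iff_wexler_raz_general
    (L a M : ℕ) [NeZero L] (haL : a ∣ L) (hML : M ∣ L)
    (g h : ZMod L → ℂ) :
    (∀ f : ZMod L → ℂ, ∀ l : ZMod L,
        f l = ∑ n : Fin (L / a), ∑ m : Fin M,
          ipL L f (gaborAtom L M h m ((n : ℕ) * a)) *
            gaborAtom L M g m ((n : ℕ) * a) l)
    ↔ (∀ m : ℕ, m < a → ∀ n : ℕ, n < L / M →
        (M : ℂ) / (a : ℂ) *
          ipL L h (fun l =>
            Complex.exp (2 * Real.pi * Complex.I * (m : ℂ) * (l.val : ℂ) / (a : ℂ)) *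
              g (l - ((n * M : ℕ) : ZMod L))) =
          if n = 0 ∧ m = 0 then 1 else 0) := by
  have : NeZero a := ⟨ne_zero_of_dvd_ne_zero (NeZero.ne L) haL⟩
  have : NeZero M := ⟨ne_zero_of_dvd_ne_zero (NeZero.ne L) hML⟩
  rw [forall_eq_sum_gaborAtom_iff hML, ZMod.forall_castHom_eq_zero_iff hML, forall₂_comm]
  refine forall₂_congr fun n hn => ?_
  refine (forall_sum_sub_natCast_mul_eq_iff haL
    (fun y => (M : ℂ) * (h y * star (g (y - ((n * M : ℕ) : ZMod L))))) _).trans ?_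
  rw [ZMod.forall_iff_forall_lt]
  refine forall₂_congr fun m hm => ?_
  simp only [ipL_exp_mul_eq_sum_stdAddChar haL, ZMod.natCast_mul_eq_zero_iff hML hn,
    ZMod.natCast_eq_zero_iff_of_lt hm, and_comm (a := n = 0), ite_and]
  simp only [mul_left_comm _ (M : ℂ), ← mul_sum, div_eq_inv_mul, mul_assoc]

/-- Wexler–Raz: if `G(g,a,M)` is a Gabor frame on `ℂ^L` (the atoms span
`ℂ^L`), then `h` is a dual window for `g` iff `(g,h)` satisfies the Wexler–Raz
equations `(M/a)·⟨h, e^{2πim·/a}·T_{nM} g⟩ = δ[n]δ[m]` for `m = 0,…,a-1`,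
`n = 0,…,L/M-1`. -/
theorem dual_window_iff_wexler_raz
    (L a M : ℕ) [NeZero L] (ha : 0 < a) (hM : 0 < M) (haL : a ∣ L) (hML : M ∣ L)
    (g h : ZMod L → ℂ)
    (hframe : Submodule.span ℂ
      (Set.range fun p : Fin M × Fin (L / a) =>
        gaborAtom L M g p.1 ((p.2 : ℕ) * a)) = ⊤) :
    (∀ f : ZMod L → ℂ, ∀ l : ZMod L,
        f l = ∑ n : Fin (L / a), ∑ m : Fin M,
          ipL L f (gaborAtom L M h m ((n : ℕ) * a)) *
            gaborAtom L M g m ((n : ℕ) * a) l)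
    ↔ (∀ m : ℕ, m < a → ∀ n : ℕ, n < L / M →
        (M : ℂ) / (a : ℂ) *
          ipL L h (fun l =>
            Complex.exp (2 * Real.pi * Complex.I * (m : ℂ) * (l.val : ℂ) / (a : ℂ)) *
              g (l - ((n * M : ℕ) : ZMod L))) =
          if n = 0 ∧ m = 0 then 1 else 0) :=
  dual_window_iff_wexler_raz_general L a M haL hML g h
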